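/- arXiv:1301.2082 — 2 statements merged into one kernel-verified Lean document; each statement's English description precedes it below -/
import Mathlib

section
/- If D is an open disc internally tangent to the unit circle at ζ ∈ 𝕋, then the set 𝔻 \ D is minimally thin at ζ. -/
/-!
The potential is `u = min (P(·, ζ)) (1 / r)`. The tangency forces the centre of the disc to be
`(1 - r) ζ`, and outside that disc `P(·, ζ) ≤ (1 - r) / r`, so `u ≥ P(·, ζ)` on `𝔻 \ D`; `u` is
superharmonic as the minimum of two harmonic functions. If `h` is a harmonic minorant of `u` and
`δ > 0`, then `h + δ log (|z - ζ| / 2)` is harmonic with boundary values `≤ 0`: the logarithmic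
pole absorbs the bound `1 / r` near `ζ`, and elsewhere `h ≤ P(·, ζ) → 0` at the circle. The
maximum principle gives `h ≤ δ log (2 / |z - ζ|)`, and `δ → 0` gives `h ≤ 0`.
-/

open Metric MeasureTheory Set Filter Topology

noncomputable section

/-- The open unit disc in the complex plane. -/
def unitDisc : Set ℂ := {z | ‖z‖ < 1}

/-- The unit circle. -/
def unitCircleSet : Set ℂ := {z | ‖z‖ = 1}

/-- The Poisson kernel of the unit disc. -/
def poissonKernelD (z ζ : ℂ) : ℝ := (1 - ‖z‖ ^ 2) / ‖z - ζ‖ ^ 2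

/-- Average of a real-valued function over the circle of centre `z` and radius `r`. -/
def circleAvg (u : ℂ → ℝ) (z : ℂ) (r : ℝ) : ℝ :=
  (2 * Real.pi)⁻¹ * ∫ θ in (0:ℝ)..(2 * Real.pi), u (z + r * Complex.exp (θ * Complex.I))

/-- Harmonicity on an open set, via the mean value property. -/
def HarmonicOnD (u : ℂ → ℝ) (U : Set ℂ) : Prop :=
  ContinuousOn u U ∧
  ∀ z ∈ U, ∀ r : ℝ, 0 < r → closedBall z r ⊆ U → u z = circleAvg u z r

/-- Superharmonicity on an open set, via the super-mean value property. -/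
def SuperharmonicOnD (u : ℂ → ℝ) (U : Set ℂ) : Prop :=
  LowerSemicontinuousOn u U ∧
  ∀ z ∈ U, ∀ r : ℝ, 0 < r → closedBall z r ⊆ U → circleAvg u z r ≤ u z

/-- A (Green) potential on the unit disc: a positive superharmonic function whose
greatest harmonic minorant is `0`. -/
def IsGreenPotential (u : ℂ → ℝ) : Prop :=
  SuperharmonicOnD u unitDisc ∧ (∀ z ∈ unitDisc, 0 < u z) ∧
  ∀ h : ℂ → ℝ, HarmonicOnD h unitDisc → (∀ z ∈ unitDisc, h z ≤ u z) →
    ∀ z ∈ unitDisc, h z ≤ 0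

/-- A set `E ⊆ 𝔻` is minimally thin at `ζ ∈ 𝕋` if some Green potential on `𝔻`
dominates the Poisson kernel `P(·,ζ)` on `E`. -/
def MinimallyThin (E : Set ℂ) (ζ : ℂ) : Prop :=
  ∃ u : ℂ → ℝ, IsGreenPotential u ∧ ∀ z ∈ E, poissonKernelD z ζ ≤ u z

/-- The `N`-th Taylor partial sum of `f` about `ξ`. -/
def taylorSum (f : ℂ → ℂ) (ξ : ℂ) (N : ℕ) (z : ℂ) : ℂ :=
  ∑ n ∈ Finset.range (N + 1), (iteratedDeriv n f ξ / (n.factorial : ℂ)) * (z - ξ) ^ n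

/-- `f` possesses a universal Taylor series about `ξ` on `Ω`: `f` is holomorphic on `Ω`,
and for every compact `K ⊆ ℂ \ Ω` with connected complement and every continuous
`g : K → ℂ` holomorphic on the interior of `K`, some subsequence of the Taylor partial
sums of `f` about `ξ` converges uniformly to `g` on `K`. -/
def IsUTS (Ω : Set ℂ) (ξ : ℂ) (f : ℂ → ℂ) : Prop :=
  DifferentiableOn ℂ f Ω ∧
  ∀ K : Set ℂ, IsCompact K → K ⊆ Ωᶜ → IsConnected Kᶜ →
    ∀ g : ℂ → ℂ, ContinuousOn g K → DifferentiableOn ℂ g (interior K) →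
      ∀ ε : ℝ, 0 < ε → ∀ M : ℕ, ∃ N ≥ M, ∀ z ∈ K, ‖taylorSum f ξ N z - g z‖ ≤ ε

/-- Truncated Stolz angular approach region at `ζ ∈ 𝕋`. -/
def stolz (α t : ℝ) (ζ : ℂ) : Set ℂ :=
  {z | ‖z - ζ‖ < α * (1 - ‖z‖) ∧ α * (1 - ‖z‖) < α * t}

/-- Extended-real logarithm, with `log 0 = ⊥`. -/
def elog (x : ℝ) : EReal := if x = 0 then ⊥ else ((Real.log x : ℝ) : EReal)

/-- Average over a circle of the real parts of an extended-real-valued function. -/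
def circleAvgE (u : ℂ → EReal) (z : ℂ) (r : ℝ) : ℝ :=
  (2 * Real.pi)⁻¹ *
    ∫ θ in (0:ℝ)..(2 * Real.pi), (u (z + r * Complex.exp (θ * Complex.I))).toReal

/-- Subharmonicity on an open set for extended-real-valued functions. -/
def SubharmonicOnE (u : ℂ → EReal) (U : Set ℂ) : Prop :=
  UpperSemicontinuousOn u U ∧
  ∀ z ∈ U, ∀ r : ℝ, 0 < r → closedBall z r ⊆ U →
    u z ≤ ((circleAvgE u z r : ℝ) : EReal)

/-- The strip `{-1 < Re z < 1}`. -/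
def strip : Set ℂ := {z | -1 < z.re ∧ z.re < 1}

lemma circleAvg_eq_circleAverage (u : ℂ → ℝ) (z : ℂ) (r : ℝ) :
    circleAvg u z r = Real.circleAverage u z r := rfl

section MeanValue

variable {u v : ℂ → ℝ} {U : Set ℂ}

lemma ContinuousOn.circleIntegrable_of_closedBall_subset (hu : ContinuousOn u U) {z : ℂ}
    {r : ℝ} (hr : 0 < r) (hK : closedBall z r ⊆ U) : CircleIntegrable u z r :=
  (hu.mono (sphere_subset_closedBall.trans hK)).circleIntegrable hr.le

lemma harmonicOnD_const (a : ℝ) (U : Set ℂ) : HarmonicOnD (fun _ => a) U :=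
  ⟨continuousOn_const, fun z _ r _ _ => (Real.circleAverage_const a z r).symm⟩

lemma HarmonicOnD.add (hu : HarmonicOnD u U) (hv : HarmonicOnD v U) :
    HarmonicOnD (fun z => u z + v z) U := by
  refine ⟨hu.1.add hv.1, fun z hz r hr hK => ?_⟩
  rw [circleAvg_eq_circleAverage, Real.circleAverage_fun_add
    (hu.1.circleIntegrable_of_closedBall_subset hr hK)
    (hv.1.circleIntegrable_of_closedBall_subset hr hK), ← circleAvg_eq_circleAverage,
    ← circleAvg_eq_circleAverage, ← hu.2 z hz r hr hK, ← hv.2 z hz r hr hK]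

lemma HarmonicOnD.const_mul (a : ℝ) (hu : HarmonicOnD u U) :
    HarmonicOnD (fun z => a * u z) U := by
  refine ⟨continuousOn_const.mul hu.1, fun z hz r hr hK => ?_⟩
  show a * u z = Real.circleAverage (fun z => a • u z) z r
  rw [Real.circleAverage_fun_smul, ← circleAvg_eq_circleAverage, ← hu.2 z hz r hr hK,
    smul_eq_mul]

lemma HarmonicOnD.congr (hu : HarmonicOnD u U) (huv : EqOn u v U) : HarmonicOnD v U := by
  refine ⟨hu.1.congr huv.symm, fun z hz r hr hK => ?_⟩
  have hsphere : EqOn u v (sphere z |r|) := by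
    rw [abs_of_pos hr]
    exact huv.mono (sphere_subset_closedBall.trans hK)
  rw [← huv hz, hu.2 z hz r hr hK, circleAvg_eq_circleAverage, circleAvg_eq_circleAverage,
    Real.circleAverage_congr_sphere hsphere]

lemma HarmonicOnD.superharmonicOnD_min (hu : HarmonicOnD u U) (hv : HarmonicOnD v U) :
    SuperharmonicOnD (fun z => min (u z) (v z)) U := by
  refine ⟨(hu.1.inf hv.1).lowerSemicontinuousOn, fun z hz r hr hK => ?_⟩
  have hint := (hu.1.inf hv.1).circleIntegrable_of_closedBall_subset hr hK
  rw [circleAvg_eq_circleAverage]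
  refine le_min ?_ ?_
  · rw [hu.2 z hz r hr hK, circleAvg_eq_circleAverage]
    exact Real.circleAverage_mono hint (hu.1.circleIntegrable_of_closedBall_subset hr hK)
      fun _ _ => min_le_left _ _
  · rw [hv.2 z hz r hr hK, circleAvg_eq_circleAverage]
    exact Real.circleAverage_mono hint (hv.1.circleIntegrable_of_closedBall_subset hr hK)
      fun _ _ => min_le_right _ _

lemma DifferentiableOn.harmonicOnD_re {f : ℂ → ℂ} (hf : DifferentiableOn ℂ f U) :
    HarmonicOnD (fun z => (f z).re) U := by
  refine ⟨Complex.continuous_re.comp_continuousOn hf.continuousOn, fun z _ r hr hK => ?_⟩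
  have hf' : DiffContOnCl ℂ f (ball z |r|) := by
    rw [abs_of_pos hr]
    exact (hf.mono (closure_ball_subset_closedBall.trans hK)).diffContOnCl
  have hint : CircleIntegrable f z r :=
    (hf.continuousOn.mono (sphere_subset_closedBall.trans hK)).circleIntegrable hr.le
  rw [circleAvg_eq_circleAverage]
  exact (congrArg Complex.re hf'.circleAverage.symm).trans
    (Complex.reCLM.circleAverage_comp_comm hint).symm

lemma harmonicOnD_log_norm_sub {ζ : ℂ} (hζ : ζ ∉ U) :
    HarmonicOnD (fun z => Real.log ‖z - ζ‖) U := by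
  refine ⟨fun z hz => ?_, fun z _ r hr hK => ?_⟩
  · have hne : ‖z - ζ‖ ≠ 0 := by
      rw [norm_ne_zero_iff, sub_ne_zero]
      exact ne_of_mem_of_not_mem hz hζ
    exact ((continuous_id.sub continuous_const).norm.continuousAt.log hne).continuousWithinAt
  · have hrζ : r < ‖z - ζ‖ := by
      by_contra! h
      exact hζ (hK (by rwa [mem_closedBall, dist_comm, dist_eq_norm]))
    rw [circleAvg_eq_circleAverage, circleAverage_log_norm_sub_const_eq_log_radius_add_posLog
      hr.ne', Real.posLog_eq_log, Real.log_mul (inv_ne_zero hr.ne') (by linarith),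
      Real.log_inv, add_neg_cancel_left]
    rw [abs_of_nonneg (by positivity), le_inv_mul_iff₀ hr, mul_one]
    exact hrζ.le

end MeanValue

section MaximumPrinciple

lemma eqOn_sphere_of_le_of_circleAverage_eq {f : ℂ → ℝ} {c : ℂ} {R a : ℝ}
    (hf : ContinuousOn f (sphere c |R|)) (hle : ∀ w ∈ sphere c |R|, f w ≤ a)
    (havg : Real.circleAverage f c R = a) : ∀ w ∈ sphere c |R|, f w = a := by
  set φ : ℝ → ℝ := fun θ => a - f (circleMap c R θ)
  have hφ : Continuous φ := continuous_const.sub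
    (hf.comp_continuous (continuous_circleMap c R) (circleMap_mem_sphere' c R))
  have hφ_nonneg : 0 ≤ φ := fun θ => sub_nonneg.2 (hle _ (circleMap_mem_sphere' c R θ))
  have hf_int : ∫ θ in (0)..2 * Real.pi, f (circleMap c R θ) = 2 * Real.pi * a := by
    rw [← havg, Real.circleAverage_def, smul_eq_mul, ← mul_assoc,
      mul_inv_cancel₀ Real.two_pi_pos.ne', one_mul]
  have hφ_int : ∫ θ in Ioc 0 (2 * Real.pi), φ θ = 0 := by
    rw [← intervalIntegral.integral_of_le Real.two_pi_pos.le, intervalIntegral.integral_sub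
      intervalIntegrable_const (hf.circleIntegrable'), intervalIntegral.integral_const, hf_int,
      sub_zero, smul_eq_mul, sub_self]
  have hφ_zero : EqOn φ 0 (Ioc 0 (2 * Real.pi)) := by
    refine Measure.eqOn_of_ae_eq ((integral_eq_zero_iff_of_nonneg hφ_nonneg
      hφ.integrableOn_Ioc).1 hφ_int) hφ.continuousOn continuousOn_const ?_
    rw [interior_Ioc, closure_Ioo Real.two_pi_pos.ne]
    exact Ioc_subset_Icc_self
  intro w hw
  rw [← image_circleMap_Ioc] at hw
  obtain ⟨θ, hθ, rfl⟩ := hw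
  exact (sub_eq_zero.1 (hφ_zero hθ)).symm

lemma HarmonicOnD.exists_mem_sphere_le {h : ℂ → ℝ} {U : Set ℂ} (hh : HarmonicOnD h U)
    {c z : ℂ} {ρ : ℝ} (hK : closedBall c ρ ⊆ U) (hz : z ∈ closedBall c ρ) :
    ∃ y ∈ sphere c ρ, h z ≤ h y := by
  obtain ⟨p, hpK, hpmax⟩ := (isCompact_closedBall c ρ).exists_isMaxOn ⟨z, hz⟩ (hh.1.mono hK)
  have hρ : 0 ≤ ρ := nonempty_closedBall.1 ⟨z, hz⟩
  have hpc : ‖p - c‖ ≤ ρ := by rwa [mem_closedBall, dist_eq_norm] at hpK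
  set e : ℂ := Complex.exp (Complex.arg (p - c) * Complex.I)
  have he : ‖e‖ = 1 := Complex.norm_exp_ofReal_mul_I _
  have hpe : p - c = ‖p - c‖ * e := (Complex.norm_mul_exp_arg_mul_I _).symm
  refine ⟨c + ρ * e, ?_, (hpmax hz).trans ?_⟩
  · simp [he, abs_of_nonneg hρ]
  -- If the maximum point `p` is interior, `h` is constant on the circle about `p` through
  -- `c + ρ e`, the point of `sphere c ρ` on the ray from `c` through `p`.
  have hye : c + ρ * e - p = ((ρ - ‖p - c‖ : ℝ) : ℂ) * e := by
    push_cast; linear_combination -hpe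
  rcases hpc.eq_or_lt with hp | hp
  · rw [hp, sub_self, Complex.ofReal_zero, zero_mul, sub_eq_zero] at hye
    rw [hye]
  set s := ρ - ‖p - c‖
  have hs : 0 < s := sub_pos.2 hp
  have hKs : closedBall p s ⊆ closedBall c ρ :=
    closedBall_subset_closedBall' (by rw [dist_eq_norm]; simp [s])
  have hsphere : sphere p |s| ⊆ closedBall c ρ := by
    rw [abs_of_pos hs]; exact sphere_subset_closedBall.trans hKs
  have heq := eqOn_sphere_of_le_of_circleAverage_eq (hh.1.mono (hsphere.trans hK))
    (fun w hw => hpmax (hsphere hw)) (hh.2 p (hK hpK) s hs (hKs.trans hK)).symm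
  refine (heq _ ?_).ge
  rw [mem_sphere, dist_eq_norm, hye, norm_mul, he, mul_one, Complex.norm_real, Real.norm_eq_abs]

lemma HarmonicOnD.nonpos_of_le_near_unitCircle {g : ℂ → ℝ} (hg : HarmonicOnD g unitDisc)
    (hbdry : ∀ γ > 0, ∃ ρ₀ < 1, ∀ y : ℂ, ρ₀ < ‖y‖ → ‖y‖ < 1 → g y ≤ γ) :
    ∀ z ∈ unitDisc, g z ≤ 0 := by
  intro z hz
  refine le_of_forall_pos_le_add fun γ hγ => ?_
  obtain ⟨ρ₀, hρ₀, hg_le⟩ := hbdry γ hγ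
  obtain ⟨ρ, hρ, hρ1⟩ := exists_between (max_lt hρ₀ (show ‖z‖ < 1 from hz))
  obtain ⟨hρ₀ρ, hzρ⟩ := max_lt_iff.1 hρ
  have hK : closedBall 0 ρ ⊆ unitDisc := fun w hw =>
    (mem_closedBall_zero_iff.1 hw).trans_lt hρ1
  obtain ⟨y, hy, hzy⟩ := hg.exists_mem_sphere_le hK (mem_closedBall_zero_iff.2 hzρ.le)
  rw [mem_sphere_zero_iff_norm] at hy
  rw [zero_add]
  exact hzy.trans (hg_le y (hy ▸ hρ₀ρ) (hy ▸ hρ1))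

end MaximumPrinciple

section PoissonKernel

variable {ζ : ℂ}

lemma sq_norm_eq_re_sq_add_im_sq (x : ℂ) : ‖x‖ ^ 2 = x.re ^ 2 + x.im ^ 2 := by
  rw [Complex.sq_norm, Complex.normSq_apply]
  ring

lemma unitDisc_eq_ball : unitDisc = ball 0 1 := by
  ext z
  simp [unitDisc]

lemma ne_of_mem_unitDisc {z : ℂ} (hz : z ∈ unitDisc) (hζ : ‖ζ‖ = 1) : z ≠ ζ := by
  rintro rfl
  exact (show ‖z‖ < 1 from hz).ne hζ

lemma norm_sub_pos_of_mem_unitDisc {z : ℂ} (hz : z ∈ unitDisc) (hζ : ‖ζ‖ = 1) :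
    0 < ‖z - ζ‖ :=
  norm_pos_iff.2 (sub_ne_zero.2 (ne_of_mem_unitDisc hz hζ))

lemma log_half_norm_sub_neg {z : ℂ} (hz : z ∈ unitDisc) (hζ : ‖ζ‖ = 1) :
    Real.log (‖z - ζ‖ / 2) < 0 := by
  refine Real.log_neg (div_pos (norm_sub_pos_of_mem_unitDisc hz hζ) two_pos) ?_
  have : ‖z - ζ‖ < 2 := (norm_sub_le z ζ).trans_lt (by rw [hζ]; linarith [show ‖z‖ < 1 from hz])
  linarith

lemma poissonKernelD_pos {z : ℂ} (hz : z ∈ unitDisc) (hζ : ‖ζ‖ = 1) :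
    0 < poissonKernelD z ζ := by
  have hz1 : ‖z‖ < 1 := hz
  have hzζ := norm_sub_pos_of_mem_unitDisc hz hζ
  exact div_pos (by nlinarith [norm_nonneg z]) (by positivity)

lemma poissonKernelD_eq_re (hζ : ‖ζ‖ = 1) (w : ℂ) :
    poissonKernelD w ζ = ((ζ + w) / (ζ - w)).re := by
  have := congrFun (poissonKernel_eq_re_herglotzRieszKernel (c := 0) (w := w)) ζ
  simp only [poissonKernel, herglotzRieszKernel, sub_zero, Function.comp_apply, hζ] at this
  rw [poissonKernelD, ← this, one_pow, norm_sub_rev]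

lemma harmonicOnD_poissonKernelD (hζ : ‖ζ‖ = 1) :
    HarmonicOnD (fun z => poissonKernelD z ζ) unitDisc := by
  have hdiff : DifferentiableOn ℂ (fun w => (ζ + w) / (ζ - w)) unitDisc := fun w hw =>
    ((differentiableAt_const ζ).add differentiableAt_id).div
      ((differentiableAt_const ζ).sub differentiableAt_id)
      (sub_ne_zero.2 (ne_of_mem_unitDisc hw hζ).symm) |>.differentiableWithinAt
  exact hdiff.harmonicOnD_re.congr fun w _ => (poissonKernelD_eq_re hζ w).symm

lemma poissonKernelD_le_of_le_norm_sub {y : ℂ} {η : ℝ} (hη : 0 < η) (hy : ‖y‖ ≤ 1)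
    (hyζ : η ≤ ‖y - ζ‖) : poissonKernelD y ζ ≤ 2 * (1 - ‖y‖) / η ^ 2 := by
  calc poissonKernelD y ζ ≤ (1 - ‖y‖ ^ 2) / η ^ 2 :=
        div_le_div_of_nonneg_left (by nlinarith [norm_nonneg y]) (by positivity)
          (pow_le_pow_left₀ hη.le hyζ 2)
    _ ≤ 2 * (1 - ‖y‖) / η ^ 2 := by gcongr; nlinarith [norm_nonneg y]

lemma center_eq_of_ball_subset_unitDisc {c : ℂ} {r : ℝ} (hr : 0 < r)
    (hsub : ball c r ⊆ unitDisc) (hζ : ‖ζ‖ = 1) (htan : ‖c - ζ‖ = r) :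
    c = ((1 - r : ℝ) : ℂ) * ζ := by
  have hclosed : closedBall c r ⊆ closedBall 0 1 := by
    rw [← closure_ball c hr.ne']
    exact (closure_mono (unitDisc_eq_ball ▸ hsub)).trans closure_ball_subset_closedBall
  have hfar : ‖c + r * ζ‖ ≤ 1 := by
    simpa using hclosed (show c + r * ζ ∈ closedBall c r by simp [hζ, abs_of_pos hr])
  have h1 := sq_norm_eq_re_sq_add_im_sq ζ
  have h2 := sq_norm_eq_re_sq_add_im_sq (c - ζ)
  have h3 := sq_norm_eq_re_sq_add_im_sq (c + r * ζ)
  have h3' : ‖c + r * ζ‖ ^ 2 ≤ 1 := pow_le_one₀ (norm_nonneg _) hfar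
  rw [hζ] at h1
  rw [htan] at h2
  simp only [Complex.sub_re, Complex.sub_im, Complex.add_re, Complex.add_im, Complex.mul_re,
    Complex.mul_im, Complex.ofReal_re, Complex.ofReal_im] at h2 h3
  apply Complex.ext <;>
  simp only [Complex.mul_re, Complex.mul_im, Complex.ofReal_re, Complex.ofReal_im] <;>
  nlinarith [sq_nonneg (c.re - (1 - r) * ζ.re), sq_nonneg (c.im - (1 - r) * ζ.im)]

lemma poissonKernelD_le_of_notMem_ball {z : ℂ} {r : ℝ} (hr : 0 < r) (hζ : ‖ζ‖ = 1)
    (hz : z ∈ unitDisc) (hzc : z ∉ ball (((1 - r : ℝ) : ℂ) * ζ) r) :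
    poissonKernelD z ζ ≤ (1 - r) / r := by
  have hzζ := norm_sub_pos_of_mem_unitDisc hz hζ
  rw [mem_ball, dist_eq_norm, not_lt] at hzc
  rw [poissonKernelD, div_le_div_iff₀ (by positivity) hr]
  have h1 := sq_norm_eq_re_sq_add_im_sq ζ
  have h2 := sq_norm_eq_re_sq_add_im_sq (z - ((1 - r : ℝ) : ℂ) * ζ)
  have h2' : r ^ 2 ≤ ‖z - ((1 - r : ℝ) : ℂ) * ζ‖ ^ 2 := pow_le_pow_left₀ hr.le hzc 2
  rw [hζ] at h1
  rw [sq_norm_eq_re_sq_add_im_sq, sq_norm_eq_re_sq_add_im_sq (z - ζ)]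
  simp only [Complex.sub_re, Complex.sub_im, Complex.mul_re, Complex.mul_im, Complex.ofReal_re,
    Complex.ofReal_im] at h2 ⊢
  nlinarith

end PoissonKernel

section Minorant

variable {ζ : ℂ} {B : ℝ} {h : ℂ → ℝ}

lemma HarmonicOnD.add_mul_log_nonpos (hζ : ‖ζ‖ = 1) (hh : HarmonicOnD h unitDisc)
    (hle : ∀ z ∈ unitDisc, h z ≤ min (poissonKernelD z ζ) B) {δ : ℝ} (hδ : 0 < δ) :
    ∀ z ∈ unitDisc, h z + δ * Real.log (‖z - ζ‖ / 2) ≤ 0 := by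
  have hg : HarmonicOnD (fun z => h z + δ * Real.log (‖z - ζ‖ / 2)) unitDisc := by
    refine (hh.add (((harmonicOnD_log_norm_sub (fun h𝔻 => ne_of_mem_unitDisc h𝔻 hζ rfl)).add
      (harmonicOnD_const (-Real.log 2) _)).const_mul δ)).congr fun z hz => ?_
    rw [Real.log_div (norm_sub_pos_of_mem_unitDisc hz hζ).ne' two_ne_zero, sub_eq_add_neg]
  refine hg.nonpos_of_le_near_unitCircle fun γ hγ => ?_
  set η := 2 * Real.exp (-B / δ)
  have hη : 0 < η := by positivity
  have hlogη : δ * Real.log (η / 2) = -B := by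
    rw [mul_div_cancel_left₀ _ two_ne_zero, Real.log_exp]
    field_simp
  refine ⟨1 - γ * η ^ 2 / 2, by linarith [show 0 < γ * η ^ 2 / 2 by positivity],
    fun y hy1 hy2 => ?_⟩
  have hy : y ∈ unitDisc := hy2
  have hlog_y := mul_neg_of_pos_of_neg hδ (log_half_norm_sub_neg hy hζ)
  rcases le_or_gt ‖y - ζ‖ η with hnear | hfar
  · have hlog_le : δ * Real.log (‖y - ζ‖ / 2) ≤ -B := by
      rw [← hlogη]
      gcongr
      exact div_pos (norm_sub_pos_of_mem_unitDisc hy hζ) two_pos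
    linarith [(hle y hy).trans (min_le_right _ _)]
  · have hP : poissonKernelD y ζ ≤ γ := by
      refine (poissonKernelD_le_of_le_norm_sub hη hy2.le hfar.le).trans ?_
      rw [div_le_iff₀ (by positivity)]
      linarith
    linarith [(hle y hy).trans (min_le_left _ _)]

lemma HarmonicOnD.nonpos_of_le_min_poissonKernelD (hζ : ‖ζ‖ = 1)
    (hh : HarmonicOnD h unitDisc) (hle : ∀ z ∈ unitDisc, h z ≤ min (poissonKernelD z ζ) B) :
    ∀ z ∈ unitDisc, h z ≤ 0 := by
  intro z hz
  set ℓ := Real.log (‖z - ζ‖ / 2)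
  have hℓ : ℓ < 0 := log_half_norm_sub_neg hz hζ
  refine le_of_forall_pos_le_add fun ε hε => ?_
  have hδℓ : ε / -ℓ * ℓ = -ε := by field_simp [hℓ.ne]
  linarith [hh.add_mul_log_nonpos hζ hle (div_pos hε (neg_pos.2 hℓ)) z hz]

end Minorant

/-- If `D` is an open disc internally tangent to the unit circle at `ζ ∈ 𝕋`, then
`𝔻 \ D` is minimally thin at `ζ`. -/
theorem stmt2 (c : ℂ) (r : ℝ) (ζ : ℂ) (hr : 0 < r)
    (hsub : ball c r ⊆ unitDisc) (hζ : ζ ∈ unitCircleSet) (htan : ‖c - ζ‖ = r) :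
    MinimallyThin (unitDisc \ ball c r) ζ := by
  have hζ1 : ‖ζ‖ = 1 := hζ
  have hc := center_eq_of_ball_subset_unitDisc hr hsub hζ1 htan
  refine ⟨fun z => min (poissonKernelD z ζ) r⁻¹, ⟨?_, fun z hz => ?_, fun h hh hle => ?_⟩,
    fun z hz => le_min le_rfl ?_⟩
  · exact (harmonicOnD_poissonKernelD hζ1).superharmonicOnD_min (harmonicOnD_const _ _)
  · exact lt_min (poissonKernelD_pos hz hζ1) (inv_pos.2 hr)
  · exact hh.nonpos_of_le_min_poissonKernelD hζ1 hle
  · calc poissonKernelD z ζ ≤ (1 - r) / r :=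
          poissonKernelD_le_of_notMem_ball hr hζ1 hz.1 (hc ▸ hz.2)
      _ ≤ r⁻¹ := by rw [inv_eq_one_div]; gcongr; linarith
end
end

section
/- Let f be holomorphic on 𝔻 with partial sums S_N about 0, and suppose S_{N_k} → f locally uniformly on 𝔻 with N_k → ∞. Then limsup_{k→∞} (1/N_k) log |S_{N_k}(z) − f(z)| ≤ log|z| for every z ∈ 𝔻. -/
/-! If `f` is holomorphic on `𝔻` and `‖z‖ < r < 1`, the Taylor series of `f` converges at `r`,
so its coefficients satisfy `‖aₙ‖ rⁿ ≤ B`. The tail of the series at `z` is then dominated by a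
geometric series: `‖S_N(z) - f(z)‖ ≤ C (‖z‖/r)^N`. Taking `(1/N_k) log` gives
`limsup ≤ log (‖z‖/r)`, and letting `r → 1` gives `log ‖z‖`. -/

open Metric MeasureTheory Set Filter Topology

noncomputable section

open scoped Nat

section TaylorRemainder

lemma taylorSum_eq_sum_range (f : ℂ → ℂ) (c z : ℂ) (N : ℕ) :
    taylorSum f c N z =
      ∑ n ∈ Finset.range (N + 1), (n ! : ℂ)⁻¹ • (z - c) ^ n • iteratedDeriv n f c := by
  refine Finset.sum_congr rfl fun n _ => ?_
  simp only [smul_eq_mul]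
  ring

lemma taylorSum_succ_sub (f : ℂ → ℂ) (c z : ℂ) (N : ℕ) :
    taylorSum f c (N + 1) z - taylorSum f c N z =
      iteratedDeriv (N + 1) f c / ((N + 1)! : ℂ) * (z - c) ^ (N + 1) := by
  rw [taylorSum, Finset.sum_range_succ, taylorSum, add_sub_cancel_left]

variable {f : ℂ → ℂ} {c z : ℂ} {R r : ℝ}

lemma tendsto_taylorSum (hf : DifferentiableOn ℂ f (ball c R)) (hz : z ∈ ball c R) :
    Tendsto (fun N => taylorSum f c N z) atTop (𝓝 (f z)) := by
  simp only [taylorSum_eq_sum_range]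
  exact (Complex.hasSum_taylorSeries_on_ball hf hz).tendsto_sum_nat.comp
    (tendsto_add_atTop_nat 1)

lemma exists_norm_taylorCoeff_mul_pow_le (hf : DifferentiableOn ℂ f (ball c R))
    (hr₀ : 0 ≤ r) (hr : r < R) :
    ∃ B, ∀ n, ‖iteratedDeriv n f c / (n ! : ℂ)‖ * r ^ n ≤ B := by
  have hw : c + r ∈ ball c R := by simpa [abs_of_nonneg hr₀] using hr
  obtain ⟨B, hB⟩ :=
    (Complex.hasSum_taylorSeries_on_ball hf hw).summable.tendsto_atTop_zero.norm.bddAbove_range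
  refine ⟨B, fun n => le_trans (le_of_eq ?_) (hB (mem_range_self n))⟩
  simp only [div_eq_inv_mul, Complex.norm_mul, norm_inv, RCLike.norm_natCast, add_sub_cancel_left,
    smul_eq_mul, norm_pow, Complex.norm_real, Real.norm_eq_abs, abs_of_nonneg hr₀]
  ring

theorem exists_norm_taylorSum_sub_le (hf : DifferentiableOn ℂ f (ball c R)) (hr : r < R)
    (hzr : ‖z - c‖ < r) :
    ∃ C, ∀ N, ‖taylorSum f c N z - f z‖ ≤ C * (‖z - c‖ / r) ^ N := by
  have hr₀ : 0 < r := (norm_nonneg _).trans_lt hzr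
  set q := ‖z - c‖ / r
  have hq₁ : q < 1 := (div_lt_one hr₀).2 hzr
  obtain ⟨B, hB⟩ := exists_norm_taylorCoeff_mul_pow_le hf hr₀.le hr
  have hstep : ∀ n, dist (taylorSum f c n z) (taylorSum f c (n + 1) z) ≤ B * q * q ^ n := by
    intro n
    have hzc : ‖z - c‖ = r * q := (mul_div_cancel₀ _ hr₀.ne').symm
    rw [dist_comm, dist_eq_norm, taylorSum_succ_sub, norm_mul, norm_pow, hzc, mul_pow,
      ← mul_assoc, mul_assoc B, ← pow_succ']
    exact mul_le_mul_of_nonneg_right (hB _) (by positivity)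
  refine ⟨B * q / (1 - q), fun N => ?_⟩
  rw [← dist_eq_norm, div_mul_eq_mul_div]
  exact dist_le_of_le_geometric_of_tendsto _ _ hq₁ hstep
    (tendsto_taylorSum hf (by simpa [dist_eq_norm] using hzr.trans hr)) N

end TaylorRemainder

section ExtendedLog

lemma elog_zero : elog 0 = ⊥ := if_pos rfl

lemma elog_of_ne_zero {x : ℝ} (hx : x ≠ 0) : elog x = Real.log x := if_neg hx

lemma inv_natCast_mul_elog_le_log {n : ℕ} (hn : 0 < n) {a b : ℝ} (ha : 0 ≤ a) (hab : a ≤ b) :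
    (((n : ℝ)⁻¹ : ℝ) : EReal) * elog a ≤ (((n : ℝ)⁻¹ * Real.log b : ℝ) : EReal) := by
  rcases ha.eq_or_lt with rfl | ha
  · rw [elog_zero, EReal.coe_mul_bot_of_pos (by positivity)]
    exact bot_le
  · rw [elog_of_ne_zero ha.ne', ← EReal.coe_mul, EReal.coe_le_coe_iff]
    exact mul_le_mul_of_nonneg_left (Real.log_le_log ha hab) (by positivity)

theorem limsup_inv_mul_elog_le {N : ℕ → ℕ} (hN : Tendsto N atTop atTop) {u : ℕ → ℝ}
    (hu : ∀ k, 0 ≤ u k) {C q : ℝ} (hq : 0 ≤ q) (hbound : ∀ k, u k ≤ C * q ^ N k) :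
    limsup (fun k => (((N k : ℝ)⁻¹ : ℝ) : EReal) * elog (u k)) atTop ≤ elog q := by
  have hNpos : ∀ᶠ k in atTop, 0 < N k := hN.eventually_gt_atTop 0
  rcases hq.eq_or_lt with rfl | hq
  · have hbot : ∀ᶠ k in atTop, (((N k : ℝ)⁻¹ : ℝ) : EReal) * elog (u k) = ⊥ := by
      filter_upwards [hNpos] with k hk
      have hu0 : u k = 0 := le_antisymm (by simpa [zero_pow hk.ne'] using hbound k) (hu k)
      rw [hu0, elog_zero, EReal.coe_mul_bot_of_pos (by positivity)]
    rw [limsup_congr hbot, limsup_const, elog_zero]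
  · set C' := max C 1
    have hlim : Tendsto (fun k => (N k : ℝ)⁻¹ * Real.log C' + Real.log q) atTop
        (𝓝 (Real.log q)) := by
      simpa using ((tendsto_inv_atTop_zero.comp
        (tendsto_natCast_atTop_atTop.comp hN)).mul_const (Real.log C')).add_const (Real.log q)
    have hle : ∀ᶠ k in atTop, (((N k : ℝ)⁻¹ : ℝ) : EReal) * elog (u k) ≤
        (((N k : ℝ)⁻¹ * Real.log C' + Real.log q : ℝ) : EReal) := by
      filter_upwards [hNpos] with k hk
      have hC' : u k ≤ C' * q ^ N k :=
        (hbound k).trans (mul_le_mul_of_nonneg_right (le_max_left _ _) (by positivity))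
      convert inv_natCast_mul_elog_le_log hk (hu k) hC' using 2
      rw [Real.log_mul (by positivity) (by positivity), Real.log_pow]
      field_simp
    rw [elog_of_ne_zero hq.ne', ← (EReal.tendsto_coe.2 hlim).limsup_eq]
    exact limsup_le_limsup hle

lemma le_elog_of_forall_le_elog_div {a : EReal} {x : ℝ} (hx₀ : 0 ≤ x) (hx₁ : x < 1)
    (h : ∀ r ∈ Ioo x 1, a ≤ elog (x / r)) : a ≤ elog x := by
  rcases hx₀.eq_or_lt with rfl | hx
  · simpa using h (1 / 2) ⟨by norm_num, by norm_num⟩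
  · have hlog : Tendsto (fun r => Real.log (x / r)) (𝓝[<] 1) (𝓝 (Real.log x)) := by
      have hcont : ContinuousAt (fun r => Real.log (x / r)) 1 :=
        (Real.continuousAt_log (by positivity)).comp
          (continuousAt_const.div continuousAt_id one_ne_zero)
      simpa using hcont.tendsto.mono_left nhdsWithin_le_nhds
    have hIoo : Ioo x 1 ∈ 𝓝[<] (1 : ℝ) := Ioo_mem_nhdsLT hx₁
    rw [elog_of_ne_zero hx.ne']
    refine ge_of_tendsto (EReal.tendsto_coe.2 hlog) (eventually_of_mem hIoo fun r hr => ?_)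
    simpa [elog_of_ne_zero (div_pos hx (hx.trans hr.1)).ne'] using h r hr

end ExtendedLog

theorem stmt6_general (f : ℂ → ℂ) (hf : DifferentiableOn ℂ f unitDisc)
    (N : ℕ → ℕ) (hN : StrictMono N)
    (z : ℂ) (hz : z ∈ unitDisc) :
    Filter.limsup
      (fun k => (((N k : ℝ)⁻¹ : ℝ) : EReal) * elog ‖taylorSum f 0 (N k) z - f z‖)
      atTop ≤ elog ‖z‖ := by
  have hf' : DifferentiableOn ℂ f (ball 0 1) := by simpa [unitDisc, ball] using hf
  refine le_elog_of_forall_le_elog_div (norm_nonneg z) hz fun r hr => ?_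
  obtain ⟨C, hC⟩ := exists_norm_taylorSum_sub_le hf' hr.2 (by simpa using hr.1)
  exact limsup_inv_mul_elog_le hN.tendsto_atTop (fun _ => norm_nonneg _)
    (div_nonneg (norm_nonneg z) ((norm_nonneg z).trans hr.1.le))
    fun k => by simpa using hC (N k)

/-- If `S_{N_k} → f` locally uniformly on `𝔻` with `N_k → ∞`, then
`limsup_k (1/N_k) log |S_{N_k}(z) - f(z)| ≤ log |z|` for every `z ∈ 𝔻`
(with the convention `log 0 = -∞`). -/
theorem stmt6 (f : ℂ → ℂ) (hf : DifferentiableOn ℂ f unitDisc)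
    (N : ℕ → ℕ) (hN : StrictMono N)
    (hconv : TendstoLocallyUniformlyOn (fun k z => taylorSum f 0 (N k) z) f atTop unitDisc)
    (z : ℂ) (hz : z ∈ unitDisc) :
    Filter.limsup
      (fun k => (((N k : ℝ)⁻¹ : ℝ) : EReal) * elog ‖taylorSum f 0 (N k) z - f z‖)
      atTop ≤ elog ‖z‖ :=
  stmt6_general f hf N hN z hz
end
end
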